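/- arXiv:2411.01650 — 7 statements merged into one kernel-verified Lean document; each statement's English description precedes it below -/
import Mathlib

section
/- Let (g, •) be a finite-dimensional real Novikov algebra with Koszul form B. Then B(X•Y, Z) = B(X•Z, Y) for all X, Y, Z in g, and consequently B([X,Y], Z) = 0 for all X, Y, Z, where [X,Y] = X•Y - Y•X. -/
/-!
Left symmetry says exactly that `L_{X•Y - Y•X} = [L_X, L_Y]`, so the functional
`τ(u) = tr L_u` satisfies `τ(u•v) = τ(v•u)`. The first identity is the Novikov identity under `τ`.
For the second, put `a = τ((X•Y)•Z)` and `b = τ((Y•X)•Z)`: the Novikov identity and the symmetry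
of `τ` give `a = τ(Y•(X•Z))` and `b = τ(X•(Y•Z))`, so applying `τ` to the left-symmetry identity
for `X, Y, Z` yields `a - b = b - a`, whence `a = b`.
-/

namespace LinearMap

variable {R M : Type*} [CommRing R] [AddCommGroup M] [Module R M]

def IsLeftSymmetric (mul : M →ₗ[R] M →ₗ[R] M) : Prop :=
  ∀ X Y Z : M, mul (mul X Y) Z - mul X (mul Y Z) = mul (mul Y X) Z - mul Y (mul X Z)

namespace IsLeftSymmetric

variable {mul : M →ₗ[R] M →ₗ[R] M}

theorem map_sub_mul_comm (lsym : IsLeftSymmetric mul) (X Y : M) :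
    mul (mul X Y - mul Y X) = mul X * mul Y - mul Y * mul X := by
  ext Z
  simpa [sub_eq_sub_iff_sub_eq_sub] using lsym X Y Z

theorem trace_mul_comm (lsym : IsLeftSymmetric mul) (X Y : M) :
    trace R M (mul (mul X Y)) = trace R M (mul (mul Y X)) := by
  rw [← sub_eq_zero, ← map_sub, ← map_sub, lsym.map_sub_mul_comm, map_sub,
    LinearMap.trace_mul_comm, sub_self]

theorem trace_mul_sub_mul_comm_mul_eq_zero [IsAddTorsionFree R] (lsym : IsLeftSymmetric mul)
    (nov : ∀ X Y Z : M, mul (mul X Y) Z = mul (mul X Z) Y) (X Y Z : M) :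
    trace R M (mul (mul (mul X Y - mul Y X) Z)) = 0 := by
  set τ : M →ₗ[R] R := trace R M ∘ₗ mul
  have ha : τ (mul (mul X Y) Z) = τ (mul Y (mul X Z)) := by
    rw [nov]; exact lsym.trace_mul_comm _ _
  have hb : τ (mul (mul Y X) Z) = τ (mul X (mul Y Z)) := by
    rw [nov]; exact lsym.trace_mul_comm _ _
  have hlsym := congrArg τ (lsym X Y Z)
  rw [map_sub, map_sub, ← ha, ← hb] at hlsym
  have h2 : (2 : ℕ) • τ (mul (mul X Y) Z) = (2 : ℕ) • τ (mul (mul Y X) Z) := by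
    rw [two_nsmul, two_nsmul]; linear_combination hlsym
  change τ (mul (mul X Y - mul Y X) Z) = 0
  rw [map_sub, LinearMap.sub_apply, map_sub,
    IsAddTorsionFree.nsmul_right_injective two_ne_zero h2, sub_self]

end IsLeftSymmetric

end LinearMap

theorem novikov_koszul_general (g : Type*) [AddCommGroup g] [Module ℝ g]
    (mul : g →ₗ[ℝ] g →ₗ[ℝ] g)
    (lsym : ∀ X Y Z : g,
      mul (mul X Y) Z - mul X (mul Y Z) = mul (mul Y X) Z - mul Y (mul X Z))
    (nov : ∀ X Y Z : g, mul (mul X Y) Z = mul (mul X Z) Y)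
    (B : g → g → ℝ)
    (hB : ∀ X Y : g, B X Y = LinearMap.trace ℝ g (mul (mul X Y))) :
    (∀ X Y Z : g, B (mul X Y) Z = B (mul X Z) Y) ∧
    (∀ X Y Z : g, B (mul X Y - mul Y X) Z = 0) := by
  refine ⟨fun X Y Z => by rw [hB, hB, nov], fun X Y Z => ?_⟩
  rw [hB]
  exact LinearMap.IsLeftSymmetric.trace_mul_sub_mul_comm_mul_eq_zero lsym nov X Y Z

/-- For a finite-dimensional real Novikov algebra, the Koszul form satisfies
`B(X•Y, Z) = B(X•Z, Y)` and consequently `B([X,Y], Z) = 0`. -/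
theorem novikov_koszul (g : Type*) [AddCommGroup g] [Module ℝ g]
    [FiniteDimensional ℝ g] (mul : g →ₗ[ℝ] g →ₗ[ℝ] g)
    (lsym : ∀ X Y Z : g,
      mul (mul X Y) Z - mul X (mul Y Z) = mul (mul Y X) Z - mul Y (mul X Z))
    (nov : ∀ X Y Z : g, mul (mul X Y) Z = mul (mul X Z) Y)
    (B : g → g → ℝ)
    (hB : ∀ X Y : g, B X Y = LinearMap.trace ℝ g (mul (mul X Y))) :
    (∀ X Y Z : g, B (mul X Y) Z = B (mul X Z) Y) ∧
    (∀ X Y Z : g, B (mul X Y - mul Y X) Z = 0) :=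
  novikov_koszul_general g mul lsym nov B hB
end

section
/- Let (g, •) be a finite-dimensional real Novikov algebra whose Koszul form B(X,Y) = tr(L_{X•Y}) is positive definite. Then (g, •) is commutative. -/
/-!
Left symmetry says exactly that `L_{X•Y - Y•X} = [L_X, L_Y]`, so `tr L_{X•Y} = tr L_{Y•X}`.
Combining this symmetry with left symmetry and the Novikov identity shows that
`tr L_{(X•Y - Y•X)•Z}` equals its own negative, so every commutator lies in the radical of
the Koszul form, which is trivial when the form is positive definite.
-/

namespace NovikovAlgebra

open LinearMap (trace)

variable {R M : Type*} [CommRing R] [AddCommGroup M] [Module R M] {mul : M →ₗ[R] M →ₗ[R] M}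

theorem mul_commutator_eq_lie
    (lsym : ∀ X Y Z : M,
      mul (mul X Y) Z - mul X (mul Y Z) = mul (mul Y X) Z - mul Y (mul X Z))
    (U V : M) : mul (mul U V - mul V U) = mul U ∘ₗ mul V - mul V ∘ₗ mul U := by
  ext Z
  simp only [map_sub, LinearMap.sub_apply, LinearMap.comp_apply]
  rw [sub_eq_sub_iff_sub_eq_sub]
  exact lsym U V Z

variable [Module.Free R M] [Module.Finite R M]

theorem trace_mul_mul_comm
    (lsym : ∀ X Y Z : M,
      mul (mul X Y) Z - mul X (mul Y Z) = mul (mul Y X) Z - mul Y (mul X Z))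
    (U V : M) : trace R M (mul (mul U V)) = trace R M (mul (mul V U)) := by
  have h := congrArg (trace R M) (mul_commutator_eq_lie lsym U V)
  rw [map_sub, map_sub, map_sub, LinearMap.trace_comp_comm', sub_self] at h
  exact sub_eq_zero.mp h

theorem trace_mul_mul_commutator_eq_zero [NoZeroDivisors R] [CharZero R]
    (lsym : ∀ X Y Z : M,
      mul (mul X Y) Z - mul X (mul Y Z) = mul (mul Y X) Z - mul Y (mul X Z))
    (nov : ∀ X Y Z : M, mul (mul X Y) Z = mul (mul X Z) Y) (X Y Z : M) :
    trace R M (mul (mul (mul X Y - mul Y X) Z)) = 0 := by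
  set τ : M →ₗ[R] R := trace R M ∘ₗ mul
  have τ_comm : ∀ U V, τ (mul U V) = τ (mul V U) := trace_mul_mul_comm lsym
  have h : τ (mul (mul X Y - mul Y X) Z) = -τ (mul (mul X Y - mul Y X) Z) :=
    calc τ (mul (mul X Y - mul Y X) Z)
        = τ (mul X (mul Y Z)) - τ (mul Y (mul X Z)) := by
          rw [map_sub, LinearMap.sub_apply, sub_eq_sub_iff_sub_eq_sub.mpr (lsym X Y Z), map_sub]
      _ = τ (mul (mul Y X) Z) - τ (mul (mul X Y) Z) := by
          rw [τ_comm X, τ_comm Y, nov Y X, nov X Y]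
      _ = -τ (mul (mul X Y - mul Y X) Z) := by
          rw [map_sub, LinearMap.sub_apply, map_sub, neg_sub]
  exact add_self_eq_zero.mp (eq_neg_iff_add_eq_zero.mp h)

end NovikovAlgebra

/-- A finite-dimensional real Novikov algebra with positive definite Koszul
form is commutative. -/
theorem novikov_posdef_koszul_comm (g : Type*) [AddCommGroup g] [Module ℝ g]
    [FiniteDimensional ℝ g] (mul : g →ₗ[ℝ] g →ₗ[ℝ] g)
    (lsym : ∀ X Y Z : g,
      mul (mul X Y) Z - mul X (mul Y Z) = mul (mul Y X) Z - mul Y (mul X Z))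
    (nov : ∀ X Y Z : g, mul (mul X Y) Z = mul (mul X Z) Y)
    (B : g → g → ℝ)
    (hB : ∀ X Y : g, B X Y = LinearMap.trace ℝ g (mul (mul X Y)))
    (posdef : ∀ X : g, X ≠ 0 → 0 < B X X) :
    ∀ X Y : g, mul X Y = mul Y X := by
  intro X Y
  by_contra hne
  set C := mul X Y - mul Y X
  have hC : B C C = 0 := by
    rw [hB]
    exact NovikovAlgebra.trace_mul_mul_commutator_eq_zero lsym nov X Y C
  exact (posdef C (sub_ne_zero.mpr hne)).ne' hC
end

section
/- Let (g, •) be a finite-dimensional real left symmetric algebra whose Koszul form B is positive definite, and let H ∈ g be the unique vector with B(X, H) = tr(L_X) for all X. Then the right multiplication R_H (given by R_H(X) = X•H) is symmetric with respect to B, i.e. B(R_H X, Y) = B(X, R_H Y) for all X, Y. -/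
/-!
Since `L_{[X,Y]} = [L_X, L_Y]` in a left symmetric algebra, `tr L_{X•Y} = tr L_{Y•X}`, so the
Koszul form is symmetric. Applying `Z ↦ tr L_Z` to the left symmetry identity for `(X, Y, H)` and
using `B(Z, H) = tr L_Z` for `Z = X•Y` and `Z = Y•X`, the outer terms cancel and what remains is
`B(X, Y•H) = B(Y, X•H)`.
-/

section

variable {R M : Type*} [CommRing R] [AddCommGroup M] [Module R M]

def IsLeftSymmetric (mul : M →ₗ[R] M →ₗ[R] M) : Prop :=
  ∀ X Y Z : M, mul (mul X Y) Z - mul X (mul Y Z) = mul (mul Y X) Z - mul Y (mul X Z)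

noncomputable def koszulForm (mul : M →ₗ[R] M →ₗ[R] M) (X Y : M) : R :=
  LinearMap.trace R M (mul (mul X Y))

variable {mul : M →ₗ[R] M →ₗ[R] M}

theorem IsLeftSymmetric.mul_sub_mul_eq_lie (hmul : IsLeftSymmetric mul) (X Y : M) :
    mul (mul X Y) - mul (mul Y X) = ⁅mul X, mul Y⁆ := by
  ext Z
  rw [Ring.lie_def, LinearMap.sub_apply, LinearMap.sub_apply, Module.End.mul_apply,
    Module.End.mul_apply]
  linear_combination (norm := abel) hmul X Y Z

theorem IsLeftSymmetric.koszulForm_comm (hmul : IsLeftSymmetric mul) (X Y : M) :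
    koszulForm mul X Y = koszulForm mul Y X := by
  rw [koszulForm, koszulForm, ← sub_eq_zero, ← map_sub, hmul.mul_sub_mul_eq_lie,
    LinearMap.trace_lie]

theorem IsLeftSymmetric.koszulForm_mul_right_symm (hmul : IsLeftSymmetric mul) {H : M}
    (hH : ∀ X : M, koszulForm mul X H = LinearMap.trace R M (mul X)) (X Y : M) :
    koszulForm mul (mul X H) Y = koszulForm mul X (mul Y H) := by
  have htrace : koszulForm mul (mul X Y) H - koszulForm mul X (mul Y H) =
      koszulForm mul (mul Y X) H - koszulForm mul Y (mul X H) := by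
    simp only [koszulForm, ← map_sub, hmul X Y H]
  have hXY : koszulForm mul (mul X Y) H = koszulForm mul (mul Y X) H := by
    rw [hH, hH]
    exact hmul.koszulForm_comm X Y
  linear_combination htrace - hXY + hmul.koszulForm_comm (mul X H) Y

end

theorem RH_symmetric_general (g : Type*) [AddCommGroup g] [Module ℝ g]
    (mul : g →ₗ[ℝ] g →ₗ[ℝ] g)
    (lsym : ∀ X Y Z : g,
      mul (mul X Y) Z - mul X (mul Y Z) = mul (mul Y X) Z - mul Y (mul X Z))
    (B : g → g → ℝ)
    (hB : ∀ X Y : g, B X Y = LinearMap.trace ℝ g (mul (mul X Y)))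
    (H : g) (hH : ∀ X : g, B X H = LinearMap.trace ℝ g (mul X)) :
    ∀ X Y : g, B (mul X H) Y = B X (mul Y H) := by
  obtain rfl : B = koszulForm mul := funext₂ hB
  exact IsLeftSymmetric.koszulForm_mul_right_symm lsym hH

/-- In a finite-dimensional real left symmetric algebra with positive
definite Koszul form `B`, if `H` represents the linear form `X ↦ tr(L_X)`
with respect to `B`, then right multiplication by `H` is `B`-symmetric. -/
theorem RH_symmetric (g : Type*) [AddCommGroup g] [Module ℝ g]
    [FiniteDimensional ℝ g] (mul : g →ₗ[ℝ] g →ₗ[ℝ] g)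
    (lsym : ∀ X Y Z : g,
      mul (mul X Y) Z - mul X (mul Y Z) = mul (mul Y X) Z - mul Y (mul X Z))
    (B : g → g → ℝ)
    (hB : ∀ X Y : g, B X Y = LinearMap.trace ℝ g (mul (mul X Y)))
    (posdef : ∀ X : g, X ≠ 0 → 0 < B X X)
    (H : g) (hH : ∀ X : g, B X H = LinearMap.trace ℝ g (mul X)) :
    ∀ X Y : g, B (mul X H) Y = B X (mul Y H) :=
  RH_symmetric_general g mul lsym B hB H hH
end

section
/- Let (V, ⟨,⟩) be a finite-dimensional real inner product space and S, A endomorphisms of V with S symmetric, S = A + A* - Id, and [S,A] = S² - S (where A* is the adjoint of A). Then V decomposes orthogonally as V = V₁ ⊕ V₂ with V₁ = ker S and V₂ = im S, both V₁ and V₂ are invariant under A and S, S restricted to V₂ is the identity, A - (1/2)Id restricted to V₁ is skew-symmetric, and A - Id restricted to V₂ is skew-symmetric. -/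
/-!
For an eigenvector `v` of the symmetric `S`, `⟪[S, A] v, v⟫ = 0`; since `[S, A] = S² - S` maps
`v` to a multiple of itself, `S² - S` kills every eigenspace, and these span `V`, so `S` is an
orthogonal projection onto `im S = (ker S)ᗮ`. The invariance statements are the commutation
relation read on `ker S` and `im S`, and `A + A* = S + 1` acts as `1` on `ker S` and as `2` on
`im S`, which is the skew-symmetry of `A - ½` and `A - 1` there.
-/
open RealInnerProductSpace Module.End

namespace LinearMap

section RCLike

variable {𝕜 E F : Type*} [RCLike 𝕜] [NormedAddCommGroup E] [InnerProductSpace 𝕜 E]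
  [FiniteDimensional 𝕜 E] [AddCommGroup F] [Module 𝕜 F]

theorem IsSymmetric.eq_zero_of_eigenspace_le_ker {T : E →ₗ[𝕜] E} (hT : T.IsSymmetric)
    {f : E →ₗ[𝕜] F} (hf : ∀ μ, eigenspace T μ ≤ ker f) : f = 0 := by
  have htop : ⨆ μ, eigenspace T μ = ⊤ :=
    Submodule.orthogonal_eq_bot_iff.mp hT.orthogonalComplement_iSup_eigenspaces_eq_bot
  rw [← ker_eq_top, eq_top_iff, ← htop]
  exact iSup_le hf

end RCLike

variable {E : Type*} [NormedAddCommGroup E] [InnerProductSpace ℝ E]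

theorem IsSymmetric.inner_commutator_apply_self_eq_zero_of_eigenvector {S : E →ₗ[ℝ] E}
    (hS : S.IsSymmetric) (A : E →ₗ[ℝ] E) {μ : ℝ} {v : E} (hv : S v = μ • v) :
    ⟪(S ∘ₗ A - A ∘ₗ S) v, v⟫ = 0 := by
  simp only [sub_apply, comp_apply, inner_sub_left, hS (A v), hv, map_smul,
    real_inner_smul_left, real_inner_smul_right, sub_self]

theorem IsSymmetric.comp_self_eq_self_of_commutator_eq [FiniteDimensional ℝ E]
    {S A : E →ₗ[ℝ] E} (hS : S.IsSymmetric) (h : S ∘ₗ A - A ∘ₗ S = S ∘ₗ S - S) :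
    S ∘ₗ S = S := by
  rw [← sub_eq_zero]
  refine hS.eq_zero_of_eigenspace_le_ker fun μ v hv => ?_
  rw [mem_eigenspace_iff] at hv
  have hval : (S ∘ₗ S - S) v = (μ * μ - μ) • v := by
    simp only [sub_apply, comp_apply, hv, map_smul, sub_smul, smul_smul]
  have horth : ⟪(S ∘ₗ S - S) v, v⟫ = 0 :=
    h ▸ hS.inner_commutator_apply_self_eq_zero_of_eigenvector A hv
  rw [mem_ker, ← inner_self_eq_zero (𝕜 := ℝ)]
  nth_rw 2 [hval]
  rw [real_inner_smul_right, horth, mul_zero]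

theorem inner_sub_smul_eq_neg_of_add_adjoint_apply_eq [FiniteDimensional ℝ E]
    (A : E →ₗ[ℝ] E) {c : ℝ} {x : E} (hx : (A + adjoint A) x = (2 * c) • x) (y : E) :
    ⟪A x - c • x, y⟫ = -⟪A y - c • y, x⟫ := by
  have hsum : ⟪A x, y⟫ + ⟪A y, x⟫ = 2 * c * ⟪x, y⟫ := by
    rw [← real_inner_smul_left, ← hx, add_apply, inner_add_left, adjoint_inner_left,
      real_inner_comm x]
  simp only [inner_sub_left, real_inner_smul_left, real_inner_comm x y] at hsum ⊢
  linarith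

end LinearMap

/-- Decomposition lemma: if `S` is symmetric, `S = A + A* - Id` and
`[S,A] = S² - S`, then `V` splits orthogonally as `ker S ⊕ im S`, both
summands are `A`- and `S`-invariant, `S` is the identity on `im S`,
`A - ½Id` is skew on `ker S` and `A - Id` is skew on `im S`. -/
theorem SA_decomposition (V : Type*) [NormedAddCommGroup V]
    [InnerProductSpace ℝ V] [FiniteDimensional ℝ V]
    (S A : V →ₗ[ℝ] V)
    (hS : ∀ x y : V, ⟪S x, y⟫ = ⟪x, S y⟫)
    (h1 : S = A + LinearMap.adjoint A - LinearMap.id)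
    (h2 : S ∘ₗ A - A ∘ₗ S = S ∘ₗ S - S) :
    (LinearMap.ker S)ᗮ = LinearMap.range S ∧
    (∀ x ∈ LinearMap.ker S, A x ∈ LinearMap.ker S) ∧
    (∀ x ∈ LinearMap.range S, A x ∈ LinearMap.range S) ∧
    (∀ x ∈ LinearMap.ker S, S x ∈ LinearMap.ker S) ∧
    (∀ x ∈ LinearMap.range S, S x = x) ∧
    (∀ x y : V, x ∈ LinearMap.ker S → y ∈ LinearMap.ker S →
      ⟪A x - (2:ℝ)⁻¹ • x, y⟫ = -⟪A y - (2:ℝ)⁻¹ • y, x⟫) ∧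
    (∀ x y : V, x ∈ LinearMap.range S → y ∈ LinearMap.range S →
      ⟪A x - x, y⟫ = -⟪A y - y, x⟫) := by
  have hSym : S.IsSymmetric := hS
  have hidem : ∀ v, S (S v) = S v :=
    LinearMap.ext_iff.mp (hSym.comp_self_eq_self_of_commutator_eq h2)
  have hSA : ∀ v, S (A v) = A (S v) + (S (S v) - S v) := fun v => by
    rw [← LinearMap.comp_apply, ← sub_eq_iff_eq_add', ← LinearMap.comp_apply]
    exact LinearMap.congr_fun h2 v
  have hsum : ∀ v, (A + LinearMap.adjoint A) v = S v + v := fun v => by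
    rw [h1]; simp
  refine ⟨?_, fun x hx => ?_, ?_, fun x hx => ?_, ?_, fun x y hx _ => ?_, fun x y hx _ => ?_⟩
  · rw [← hSym.orthogonal_range, Submodule.orthogonal_orthogonal]
  · rw [LinearMap.mem_ker] at hx ⊢
    rw [hSA, hx, map_zero, map_zero, sub_zero, add_zero]
  · rintro _ ⟨y, rfl⟩
    exact ⟨A y - S y + y, by rw [map_add, map_sub, hSA]; abel⟩
  · rw [LinearMap.mem_ker, LinearMap.mem_ker.mp hx, map_zero]
  · rintro _ ⟨y, rfl⟩
    exact hidem y
  · refine LinearMap.inner_sub_smul_eq_neg_of_add_adjoint_apply_eq A ?_ y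
    rw [hsum, LinearMap.mem_ker.mp hx]; norm_num
  · obtain ⟨z, rfl⟩ := hx
    have hSz : (A + LinearMap.adjoint A) (S z) = (2 * 1 : ℝ) • S z := by
      rw [hsum, hidem]; module
    simpa using LinearMap.inner_sub_smul_eq_neg_of_add_adjoint_apply_eq A hSz y
end

section
/- Let (h, ∘, ⟨,⟩) be a finite-dimensional real Hessian algebra and B a skew-symmetric endomorphism of h satisfying B(X∘Y) = B(X)∘Y + X∘B(Y) + (1/2) X∘Y for all X, Y. Then the product ∘ is identically zero. -/
/-!
Let `B` act on bilinear maps by `(B·μ)(X, Y) = B μ(X, Y) - μ(B X, Y) - μ(X, B Y)`. Since `B` is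
skew, so is this action for the Hilbert–Schmidt inner product `⟨μ, ν⟩ = ∑ᵢⱼ ⟪μ(eᵢ, eⱼ), ν(eᵢ, eⱼ)⟫`,
hence `⟨B·μ, μ⟩ = 0`. The hypothesis on `B` says `B·μ = ½ μ` for the product `μ`, so
`½ ‖μ‖² = 0`.
-/

open RealInnerProductSpace

lemma Finset.sum_sum_mul_eq_zero_of_skew_of_symm {ι : Type*} (s : Finset ι) (a g : ι → ι → ℝ)
    (ha : ∀ i k, a k i = -a i k) (hg : ∀ i k, g k i = g i k) :
    ∑ i ∈ s, ∑ k ∈ s, a i k * g i k = 0 := by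
  have hneg : ∑ i ∈ s, ∑ k ∈ s, a i k * g i k = -∑ i ∈ s, ∑ k ∈ s, a i k * g i k :=
    calc ∑ i ∈ s, ∑ k ∈ s, a i k * g i k = ∑ k ∈ s, ∑ i ∈ s, a i k * g i k := Finset.sum_comm
      _ = ∑ k ∈ s, ∑ i ∈ s, -(a k i * g k i) :=
        Finset.sum_congr rfl fun k _ => Finset.sum_congr rfl fun i _ => by
          rw [ha k i, hg k i, neg_mul]
      _ = -∑ i ∈ s, ∑ k ∈ s, a i k * g i k := by simp only [Finset.sum_neg_distrib]
  linarith

/-- The sum is the trace of `(f† f) B`, a symmetric operator times a skew one. -/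
lemma OrthonormalBasis.sum_inner_map_skew_apply_self_eq_zero
    {E F ι : Type*} [NormedAddCommGroup E] [InnerProductSpace ℝ E]
    [NormedAddCommGroup F] [InnerProductSpace ℝ F] [Fintype ι]
    (b : OrthonormalBasis ι ℝ E) {B : E →ₗ[ℝ] E} (hB : ∀ x y, ⟪B x, y⟫ = -⟪B y, x⟫)
    (f : E →ₗ[ℝ] F) :
    ∑ i, ⟪f (B (b i)), f (b i)⟫ = 0 := by
  have hexpand : ∀ i, ⟪f (B (b i)), f (b i)⟫ = ∑ k, ⟪b k, B (b i)⟫ * ⟪f (b k), f (b i)⟫ := by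
    intro i
    conv_lhs => rw [← b.sum_repr' (B (b i))]
    simp only [map_sum, map_smul, sum_inner, real_inner_smul_left]
  simp only [hexpand]
  refine Finset.sum_sum_mul_eq_zero_of_skew_of_symm _ _ _ (fun i k => ?_)
    (fun i k => real_inner_comm _ _)
  rw [real_inner_comm, hB, real_inner_comm]

theorem hessian_with_skew_deriv_trivial_general (h : Type*) [NormedAddCommGroup h]
    [InnerProductSpace ℝ h] [FiniteDimensional ℝ h]
    (mul : h →ₗ[ℝ] h →ₗ[ℝ] h)
    (B : h →ₗ[ℝ] h)
    (hskew : ∀ X Y : h, ⟪B X, Y⟫ = -⟪B Y, X⟫)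
    (hder : ∀ X Y : h,
      B (mul X Y) = mul (B X) Y + mul X (B Y) + (2:ℝ)⁻¹ • mul X Y) :
    ∀ X Y : h, mul X Y = 0 := by
  set b := stdOrthonormalBasis ℝ h
  have hB_self : ∀ i j, ⟪B (mul (b i) (b j)), mul (b i) (b j)⟫ = 0 := fun i j => by
    linarith [hskew (mul (b i) (b j)) (mul (b i) (b j))]
  have hleft : ∑ i, ∑ j, ⟪mul (B (b i)) (b j), mul (b i) (b j)⟫ = 0 := by
    rw [Finset.sum_comm]
    exact Finset.sum_eq_zero fun j _ =>
      b.sum_inner_map_skew_apply_self_eq_zero hskew (mul.flip (b j))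
  have hright : ∑ i, ∑ j, ⟪mul (b i) (B (b j)), mul (b i) (b j)⟫ = 0 :=
    Finset.sum_eq_zero fun i _ => b.sum_inner_map_skew_apply_self_eq_zero hskew (mul (b i))
  have hsum : ∑ i, ∑ j, ⟪B (mul (b i) (b j)), mul (b i) (b j)⟫ =
      ∑ i, ∑ j, ⟪mul (B (b i)) (b j), mul (b i) (b j)⟫
        + ∑ i, ∑ j, ⟪mul (b i) (B (b j)), mul (b i) (b j)⟫
        + (2:ℝ)⁻¹ * ∑ i, ∑ j, ‖mul (b i) (b j)‖ ^ 2 := by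
    simp only [hder, inner_add_left, real_inner_smul_left, real_inner_self_eq_norm_sq,
      Finset.sum_add_distrib, Finset.mul_sum]
  simp only [hB_self, Finset.sum_const_zero, hleft, hright] at hsum
  have hzero : ∀ i j, mul (b i) (b j) = 0 := by
    have hnorms : ∑ i, ∑ j, ‖mul (b i) (b j)‖ ^ 2 = 0 := by linarith
    have hrow_nonneg : ∀ i, 0 ≤ ∑ j, ‖mul (b i) (b j)‖ ^ 2 := fun i => by positivity
    simpa [Finset.sum_eq_zero_iff_of_nonneg, hrow_nonneg] using hnorms
  have hmul : mul = 0 :=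
    LinearMap.ext_basis b.toBasis b.toBasis fun i j => by simpa using hzero i j
  simp [hmul]

/-- If a finite-dimensional real Hessian algebra admits a skew-symmetric
endomorphism `B` with `B(X∘Y) = B(X)∘Y + X∘B(Y) + ½ X∘Y`, then the
product is identically zero. -/
theorem hessian_with_skew_deriv_trivial (h : Type*) [NormedAddCommGroup h]
    [InnerProductSpace ℝ h] [FiniteDimensional ℝ h]
    (mul : h →ₗ[ℝ] h →ₗ[ℝ] h)
    (lsym : ∀ X Y Z : h,
      mul (mul X Y) Z - mul X (mul Y Z) = mul (mul Y X) Z - mul Y (mul X Z))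
    (hess : ∀ X Y Z : h,
      ⟪mul X Y - mul Y X, Z⟫ = ⟪mul Y Z, X⟫ - ⟪mul X Z, Y⟫)
    (B : h →ₗ[ℝ] h)
    (hskew : ∀ X Y : h, ⟪B X, Y⟫ = -⟪B Y, X⟫)
    (hder : ∀ X Y : h,
      B (mul X Y) = mul (B X) Y + mul X (B Y) + (2:ℝ)⁻¹ • mul X Y) :
    ∀ X Y : h, mul X Y = 0 :=
  hessian_with_skew_deriv_trivial_general h mul B hskew hder
end

section
/- Let (h, ∘, ⟨,⟩) be a finite-dimensional real Hessian algebra such that for every X, the left multiplication L_X is symmetric with respect to ⟨,⟩ and tr(L_X) = 0. Then ∘ is commutative, hence associative, and L_X = 0 for every X; that is, ∘ is the zero product. -/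
open RealInnerProductSpace

/-! Putting `Z = [X, Y]` in the Hessian identity and moving `L_X`, `L_Y` across the inner product
gives `‖[X, Y]‖² = -‖[X, Y]‖²`, so `∘` is commutative. For a commutative product the associator
changes sign when its outer arguments are swapped, while left symmetry makes it symmetric in the
first two; together these force it to vanish. Associativity then gives `L_{X∘X} = L_X²`, and for
the symmetric operator `L_X` and an orthonormal basis `(eᵢ)`,
`0 = tr L_{X∘X} = tr L_X² = ∑ ‖L_X eᵢ‖²`. -/

theorem LinearMap.IsSymmetric.eq_zero_of_trace_comp_self_eq_zero {𝕜 E : Type*} [RCLike 𝕜]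
    [NormedAddCommGroup E] [InnerProductSpace 𝕜 E] [FiniteDimensional 𝕜 E]
    {A : E →ₗ[𝕜] E} (hA : A.IsSymmetric) (htr : trace 𝕜 E (A ∘ₗ A) = 0) : A = 0 := by
  let b := stdOrthonormalBasis 𝕜 E
  have hsum : ∑ i, ‖A (b i)‖ ^ 2 = 0 := by
    have : ((∑ i, ‖A (b i)‖ ^ 2 : ℝ) : 𝕜) = 0 := by
      rw [← htr, trace_eq_sum_inner _ b]
      push_cast
      refine Finset.sum_congr rfl fun i _ => ?_
      rw [Function.comp_apply, ← hA, inner_self_eq_norm_sq_to_K]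
    exact_mod_cast this
  have hbasis : ∀ i, A (b i) = 0 := fun i => by
    simpa using (Finset.sum_eq_zero_iff_of_nonneg fun i _ => by positivity).mp hsum i
      (Finset.mem_univ i)
  exact b.toBasis.ext fun i => by simpa using hbasis i

theorem comm_of_hessian_of_symmetric {E : Type*} [NormedAddCommGroup E] [InnerProductSpace ℝ E]
    (mul : E → E → E)
    (hess : ∀ X Y Z, ⟪mul X Y - mul Y X, Z⟫ = ⟪mul Y Z, X⟫ - ⟪mul X Z, Y⟫)
    (hsymm : ∀ X Y Z, ⟪mul X Y, Z⟫ = ⟪Y, mul X Z⟫) (X Y : E) :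
    mul X Y = mul Y X := by
  set C := mul X Y - mul Y X
  have hself : ⟪C, C⟫ = -⟪C, C⟫ :=
    calc ⟪C, C⟫ = ⟪mul Y C, X⟫ - ⟪mul X C, Y⟫ := hess X Y C
      _ = ⟪C, mul Y X - mul X Y⟫ := by rw [hsymm, hsymm, inner_sub_right]
      _ = -⟪C, C⟫ := by rw [← neg_sub, inner_neg_right]
  exact sub_eq_zero.mp (inner_self_eq_zero.mp (self_eq_neg.mp hself))

section Product

variable {M : Type*} [AddCommGroup M] (mul : M → M → M)

theorem associator_eq_neg_swap_of_comm (comm : ∀ X Y, mul X Y = mul Y X) (X Y Z : M) :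
    mul (mul X Y) Z - mul X (mul Y Z) = -(mul (mul Z Y) X - mul Z (mul Y X)) := by
  rw [comm (mul X Y) Z, comm X Y, comm X (mul Y Z), comm Y Z]
  abel

theorem assoc_of_comm_of_leftSymmetric [IsAddTorsionFree M]
    (lsym : ∀ X Y Z,
      mul (mul X Y) Z - mul X (mul Y Z) = mul (mul Y X) Z - mul Y (mul X Z))
    (comm : ∀ X Y, mul X Y = mul Y X) (X Y Z : M) :
    mul (mul X Y) Z = mul X (mul Y Z) := by
  have swap := associator_eq_neg_swap_of_comm mul comm
  have hself : mul (mul X Y) Z - mul X (mul Y Z) = -(mul (mul X Y) Z - mul X (mul Y Z)) :=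
    calc mul (mul X Y) Z - mul X (mul Y Z)
        = mul (mul Y X) Z - mul Y (mul X Z) := lsym X Y Z
      _ = -(mul (mul Z X) Y - mul Z (mul X Y)) := swap Y X Z
      _ = -(mul (mul X Z) Y - mul X (mul Z Y)) := by rw [lsym Z X Y]
      _ = mul (mul Y Z) X - mul Y (mul Z X) := by rw [swap X Z Y, neg_neg]
      _ = mul (mul Z Y) X - mul Z (mul Y X) := lsym Y Z X
      _ = -(mul (mul X Y) Z - mul X (mul Y Z)) := swap Z Y X
  exact sub_eq_zero.mp (self_eq_neg.mp hself)

end Product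

/-- A finite-dimensional real Hessian algebra in which every left
multiplication `L_X` is symmetric and trace-free is commutative,
associative, and has zero product. -/
theorem hessian_symmetric_traceless_trivial (h : Type*) [NormedAddCommGroup h]
    [InnerProductSpace ℝ h] [FiniteDimensional ℝ h]
    (mul : h →ₗ[ℝ] h →ₗ[ℝ] h)
    (lsym : ∀ X Y Z : h,
      mul (mul X Y) Z - mul X (mul Y Z) = mul (mul Y X) Z - mul Y (mul X Z))
    (hess : ∀ X Y Z : h,
      ⟪mul X Y - mul Y X, Z⟫ = ⟪mul Y Z, X⟫ - ⟪mul X Z, Y⟫)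
    (hsymm : ∀ X Y Z : h, ⟪mul X Y, Z⟫ = ⟪Y, mul X Z⟫)
    (htr : ∀ X : h, LinearMap.trace ℝ h (mul X) = 0) :
    (∀ X Y : h, mul X Y = mul Y X) ∧
    (∀ X Y Z : h, mul (mul X Y) Z = mul X (mul Y Z)) ∧
    (∀ X Y : h, mul X Y = 0) := by
  have comm : ∀ X Y : h, mul X Y = mul Y X := comm_of_hessian_of_symmetric (mul · ·) hess hsymm
  have : IsAddTorsionFree h := .of_isTorsionFree ℝ h
  have assoc : ∀ X Y Z : h, mul (mul X Y) Z = mul X (mul Y Z) :=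
    assoc_of_comm_of_leftSymmetric (mul · ·) lsym comm
  refine ⟨comm, assoc, fun X Y => ?_⟩
  have hsq : mul X ∘ₗ mul X = mul (mul X X) := LinearMap.ext fun Z => (assoc X X Z).symm
  have hX : mul X = 0 :=
    LinearMap.IsSymmetric.eq_zero_of_trace_comp_self_eq_zero (hsymm X) (by rw [hsq, htr])
  rw [hX, LinearMap.zero_apply]
end

section
/- Let (h, ∘, ⟨,⟩) be a finite-dimensional real k-Hessian algebra with k < 0, and suppose there exists a nonzero u in h with L_u = 0 (i.e. u∘X = 0 for all X). Then there exists a scalar μ such that, with h₀ = μu, one has X∘Y = ⟨X,Y⟩h₀ - ⟨h₀,Y⟩X for all X,Y; i.e. the algebra is a Milnor algebra. -/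
/-!
Write `R X = X ∘ u` and `λ² = -k⟨u,u⟩ > 0`. Since `L_u = 0`, the associator identity at `(X, u, Z)`
reduces to `L_{R X} Z = k(⟨X,Z⟩u - ⟨u,Z⟩X)`, and the Hessian identity shows that `R` maps into
`u^⊥`; in particular `R² = λ²` on `u^⊥`. The associator identity at `(R A, R B, Z)` then gives
`R A ∧ R B = λ² (A ∧ B)` for `A, B ⊥ u`, which forces every vector of `u^⊥` to be an eigenvector of
`R`, so `R = l` on `u^⊥` with `l² = λ²`. Hence `l (A ∘ Y) = (R A) ∘ Y = k(⟨A,Y⟩u - ⟨u,Y⟩A)` for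
`A ⊥ u`, and `μ = k / l` works.
-/

open RealInnerProductSpace

namespace KHessian

variable {E : Type*} [NormedAddCommGroup E] [InnerProductSpace ℝ E]

def HessianCompatible (mul : E →ₗ[ℝ] E →ₗ[ℝ] E) : Prop :=
  ∀ X Y Z : E, ⟪mul X Y - mul Y X, Z⟫ = ⟪mul Y Z, X⟫ - ⟪mul X Z, Y⟫

def AssociatorIdentity (k : ℝ) (mul : E →ₗ[ℝ] E →ₗ[ℝ] E) : Prop :=
  ∀ X Y Z : E, (mul (mul X Y) Z - mul X (mul Y Z)) - (mul (mul Y X) Z - mul Y (mul X Z)) =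
    k • (⟪X, Z⟫ • Y - ⟪Y, Z⟫ • X)

variable {k : ℝ} {mul : E →ₗ[ℝ] E →ₗ[ℝ] E} {u : E}

theorem mul_mul_right (hass : AssociatorIdentity k mul) (hLu : ∀ X, mul u X = 0) (X Z : E) :
    mul (mul X u) Z = k • (⟪X, Z⟫ • u - ⟪u, Z⟫ • X) := by
  simpa [hLu] using hass X u Z

theorem inner_mul_right_eq_zero (hess : HessianCompatible mul) (hLu : ∀ X, mul u X = 0) (X : E) :
    ⟪u, mul X u⟫ = 0 := by
  have := hess u X u
  simp only [hLu, zero_sub, inner_neg_left, inner_zero_left] at this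
  rw [real_inner_comm]
  linarith

theorem mul_right_mul_right (hass : AssociatorIdentity k mul) (hLu : ∀ X, mul u X = 0) {A : E}
    (hA : ⟪u, A⟫ = 0) : mul (mul A u) u = -(k * ⟪u, u⟫) • A := by
  rw [mul_mul_right hass hLu, real_inner_comm, hA]
  module

/-- Writing `R X = X ∘ u` and `λ² = -k⟨u,u⟩`, this says `R A ∧ R B = λ² (A ∧ B)` on `u^⊥`. -/
theorem mul_right_wedge (hk : k ≠ 0) (hess : HessianCompatible mul)
    (hass : AssociatorIdentity k mul) (hLu : ∀ X, mul u X = 0) {A B : E} (hA : ⟪u, A⟫ = 0)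
    (hB : ⟪u, B⟫ = 0) (Z : E) :
    ⟪mul A u, Z⟫ • mul B u - ⟪mul B u, Z⟫ • mul A u =
      -(k * ⟪u, u⟫) • (⟪A, Z⟫ • B - ⟪B, Z⟫ • A) := by
  have H := hass (mul A u) (mul B u) Z
  simp only [mul_mul_right hass hLu, inner_mul_right_eq_zero hess hLu, map_sub, map_smul,
    LinearMap.sub_apply, LinearMap.smul_apply, hLu, inner_sub_right, real_inner_smul_right, hA, hB,
    real_inner_comm u A ▸ hA, real_inner_comm u B ▸ hB, real_inner_comm B A] at H
  apply smul_right_injective E hk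
  linear_combination (norm := module) -H

theorem mul_right_mem_span_singleton (hk : k ≠ 0) (hu : u ≠ 0) (hess : HessianCompatible mul)
    (hass : AssociatorIdentity k mul) (hLu : ∀ X, mul u X = 0) {A : E} (hA : ⟪u, A⟫ = 0) :
    mul A u ∈ ℝ ∙ A := by
  -- take `B = R A` and `Z = A` in the wedge identity, and use `R² = λ²` on `u^⊥`
  rcases eq_or_ne A 0 with rfl | hA0
  · simp
  have hc : 2 * -(k * ⟪u, u⟫) ≠ 0 :=
    mul_ne_zero two_ne_zero (neg_ne_zero.mpr (mul_ne_zero hk (inner_self_ne_zero.mpr hu)))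
  have H := mul_right_wedge hk hess hass hLu hA (inner_mul_right_eq_zero hess hLu A) A
  rw [mul_right_mul_right hass hLu hA, real_inner_smul_left] at H
  have hcol : ⟪A, A⟫ • mul A u = ⟪mul A u, A⟫ • A := by
    apply smul_right_injective E hc
    linear_combination (norm := module) -H
  refine Submodule.mem_span_singleton.mpr ⟨⟪mul A u, A⟫ / ⟪A, A⟫, ?_⟩
  rw [div_eq_inv_mul, mul_smul, ← hcol, inv_smul_smul₀ (inner_self_ne_zero.mpr hA0)]

theorem exists_mul_right_eq_smul (hk : k ≠ 0) (hu : u ≠ 0) (hess : HessianCompatible mul)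
    (hass : AssociatorIdentity k mul) (hLu : ∀ X, mul u X = 0) :
    ∃ l : ℝ, ∀ A, ⟪u, A⟫ = 0 → mul A u = l • A := by
  let R : (ℝ ∙ u)ᗮ →ₗ[ℝ] (ℝ ∙ u)ᗮ := (mul.flip u).restrict fun X _ ↦
    Submodule.mem_orthogonal_singleton_iff_inner_right.mpr (inner_mul_right_eq_zero hess hLu X)
  obtain ⟨l, hl⟩ := LinearMap.exists_eq_smul_id_of_forall_notLinearIndependent (f := R) fun A ↦ by
    rcases eq_or_ne A 0 with rfl | hA0
    · exact fun h ↦ h.ne_zero 0 rfl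
    rw [LinearIndependent.pair_iff' hA0, not_forall_not]
    obtain ⟨a, ha⟩ := Submodule.mem_span_singleton.mp <| mul_right_mem_span_singleton hk hu hess
      hass hLu (Submodule.mem_orthogonal_singleton_iff_inner_right.mp A.2)
    exact ⟨a, Subtype.ext ha⟩
  exact ⟨l, fun A hA ↦ congrArg Subtype.val
    (LinearMap.congr_fun hl ⟨A, Submodule.mem_orthogonal_singleton_iff_inner_right.mpr hA⟩)⟩

theorem mul_eq_smul_of_mul_right_eq_smul (hk : k ≠ 0) (hu : u ≠ 0)
    (hass : AssociatorIdentity k mul) (hLu : ∀ X, mul u X = 0) {l : ℝ}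
    (hl : ∀ A, ⟪u, A⟫ = 0 → mul A u = l • A) {A : E} (hA : ⟪u, A⟫ = 0) (Y : E) :
    mul A Y = (k / l) • (⟪A, Y⟫ • u - ⟪u, Y⟫ • A) := by
  rcases eq_or_ne l 0 with rfl | hl0
  · have H := mul_right_mul_right hass hLu hA
    rw [hl A hA, zero_smul, map_zero, LinearMap.zero_apply, eq_comm, smul_eq_zero] at H
    obtain rfl := H.resolve_left (neg_ne_zero.mpr (mul_ne_zero hk (inner_self_ne_zero.mpr hu)))
    simp
  · calc mul A Y = l⁻¹ • mul (l • A) Y := by simp [inv_smul_smul₀ hl0]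
      _ = (k / l) • (⟪A, Y⟫ • u - ⟪u, Y⟫ • A) := by
        rw [← hl A hA, mul_mul_right hass hLu, smul_smul, inv_mul_eq_div]

theorem mul_eq_of_forall_inner_eq_zero (hLu : ∀ X, mul u X = 0) {μ : ℝ}
    (hμ : ∀ A Y, ⟪u, A⟫ = 0 → mul A Y = μ • (⟪A, Y⟫ • u - ⟪u, Y⟫ • A)) (X Y : E) :
    mul X Y = ⟪X, Y⟫ • (μ • u) - ⟪μ • u, Y⟫ • X := by
  obtain ⟨_, hv, A, hA, rfl⟩ := (ℝ ∙ u).exists_add_mem_mem_orthogonal X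
  obtain ⟨t, rfl⟩ := Submodule.mem_span_singleton.mp hv
  rw [Submodule.mem_orthogonal_singleton_iff_inner_right] at hA
  simp only [map_add, map_smul, LinearMap.add_apply, LinearMap.smul_apply, hLu, hμ A Y hA,
    inner_add_left, real_inner_smul_left]
  module

end KHessian

open KHessian in
theorem k_hessian_with_Lu_zero_is_milnor_general (h : Type*) [NormedAddCommGroup h]
    [InnerProductSpace ℝ h]
    (k : ℝ) (hk : k < 0) (mul : h →ₗ[ℝ] h →ₗ[ℝ] h)
    (hess : ∀ X Y Z : h,
      ⟪mul X Y - mul Y X, Z⟫ = ⟪mul Y Z, X⟫ - ⟪mul X Z, Y⟫)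
    (hass : ∀ X Y Z : h,
      (mul (mul X Y) Z - mul X (mul Y Z)) -
        (mul (mul Y X) Z - mul Y (mul X Z))
      = k • (⟪X, Z⟫ • Y - ⟪Y, Z⟫ • X))
    (u : h) (hu : u ≠ 0) (hLu : ∀ X : h, mul u X = 0) :
    ∃ μ : ℝ, ∀ X Y : h,
      mul X Y = ⟪X, Y⟫ • (μ • u) - ⟪μ • u, Y⟫ • X := by
  obtain ⟨l, hl⟩ := exists_mul_right_eq_smul hk.ne hu hess hass hLu
  exact ⟨k / l, mul_eq_of_forall_inner_eq_zero hLu fun A Y hA ↦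
    mul_eq_smul_of_mul_right_eq_smul hk.ne hu hass hLu hl hA Y⟩

/-- A finite-dimensional real `k`-Hessian algebra with `k < 0` possessing a
nonzero `u` with `L_u = 0` is a Milnor algebra: `X∘Y = ⟨X,Y⟩h₀ - ⟨h₀,Y⟩X`
with `h₀ = μu` for some scalar `μ`. -/
theorem k_hessian_with_Lu_zero_is_milnor (h : Type*) [NormedAddCommGroup h]
    [InnerProductSpace ℝ h] [FiniteDimensional ℝ h]
    (k : ℝ) (hk : k < 0) (mul : h →ₗ[ℝ] h →ₗ[ℝ] h)
    (hess : ∀ X Y Z : h,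
      ⟪mul X Y - mul Y X, Z⟫ = ⟪mul Y Z, X⟫ - ⟪mul X Z, Y⟫)
    (hass : ∀ X Y Z : h,
      (mul (mul X Y) Z - mul X (mul Y Z)) -
        (mul (mul Y X) Z - mul Y (mul X Z))
      = k • (⟪X, Z⟫ • Y - ⟪Y, Z⟫ • X))
    (u : h) (hu : u ≠ 0) (hLu : ∀ X : h, mul u X = 0) :
    ∃ μ : ℝ, ∀ X Y : h,
      mul X Y = ⟪X, Y⟫ • (μ • u) - ⟪μ • u, Y⟫ • X :=
  k_hessian_with_Lu_zero_is_milnor_general h k hk mul hess hass u hu hLu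
end
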